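/- arXiv:2006.11687 — 2 statements merged into one kernel-verified Lean document; each statement's English description precedes it below -/
import Mathlib

section
/- Let D be a prefix-free set of nonempty strings over a linearly ordered alphabet, and let α₁, α₂, … and β₁, β₂, … be sequences of elements of D. Then the infinite concatenation α₁α₂⋯ is lexicographically less than β₁β₂⋯ if and only if the sequence (α₁, α₂, …) is lexicographically less than (β₁, β₂, …) where elements of D are compared by the lexicographic order on strings. -/
/-- `l` is a prefix of the infinite sequence `x`. -/
def SeqIsPrefix {σ : Type*} (l : List σ) (x : ℕ → σ) : Prop :=
  ∀ i, (h : i < l.length) → x i = l.get ⟨i, h⟩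

/-- `x` is the infinite concatenation `a 0 ++ a 1 ++ ⋯`. -/
def IsConcat {σ : Type*} (x : ℕ → σ) (a : ℕ → List σ) : Prop :=
  ∀ n, SeqIsPrefix (((List.range n).map a).flatten) x

/-- Lexicographic order on infinite sequences over an ordered type. -/
def SeqLexLt {τ : Type*} [LT τ] (x y : ℕ → τ) : Prop :=
  ∃ k, (∀ i < k, x i = y i) ∧ x k < y k

/-!
Since `D` is prefix-free, the first phrases `a k ≠ b k` at which the two parsings differ are
incomparable under the prefix order, so their lexicographic comparison is decided at a letter
inside both of them; after the common prefix `a 0 ⋯ a (k-1)` this letter is the first difference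
of the two concatenations. The converse follows from trichotomy of the lexicographic order on
phrase sequences, since equal phrase sequences of nonempty phrases have equal concatenations.
-/

section SeqLex

variable {τ : Type*}

theorem seqLexLt_iff_toLex_lt [LinearOrder τ] {x y : ℕ → τ} :
    SeqLexLt x y ↔ toLex x < toLex y :=
  Iff.rfl

theorem SeqLexLt.of_seqIsPrefix [LT τ] {u v : List τ} {x y : ℕ → τ}
    (hu : SeqIsPrefix u x) (hv : SeqIsPrefix v y) (hpre : ¬ u <+: v) (huv : u < v) :
    SeqLexLt x y := by
  rcases List.lt_iff_exists.1 huv with ⟨htake, -⟩ | ⟨i, hi₁, hi₂, heq, hlt⟩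
  · exact absurd (List.prefix_iff_eq_take.2 htake) hpre
  · refine ⟨i, fun j hj => ?_, ?_⟩
    · rw [hu j (by omega), hv j (by omega)]
      exact heq j hj
    · rw [hu i hi₁, hv i hi₂]
      exact hlt

end SeqLex

namespace IsConcat

variable {σ : Type*} {S S₁ S₂ : ℕ → σ} {a b : ℕ → List σ}

theorem seqIsPrefix_append (hS : IsConcat S a) (k : ℕ) :
    SeqIsPrefix (((List.range k).map a).flatten ++ a k) S := by
  simpa [List.range_succ] using hS (k + 1)

theorem le_length_flatten (hne : ∀ i, a i ≠ []) (n : ℕ) :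
    n ≤ ((List.range n).map a).flatten.length := by
  induction n with
  | zero => simp
  | succ n ih =>
    have hpos : 0 < (a n).length := List.length_pos_iff.2 (hne n)
    simp only [List.range_succ, List.map_append, List.flatten_append, List.length_append,
      List.map_cons, List.map_nil, List.flatten_cons, List.flatten_nil, List.append_nil]
    omega

theorem unique (h₁ : IsConcat S₁ a) (h₂ : IsConcat S₂ a) (hne : ∀ i, a i ≠ []) :
    S₁ = S₂ := by
  funext m
  have hm : m < ((List.range (m + 1)).map a).flatten.length :=
    le_length_flatten hne (m + 1)
  rw [h₁ _ m hm, h₂ _ m hm]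

variable [LinearOrder σ]

theorem seqLexLt_of_seqLexLt (hpf : ∀ i, a i ≠ b i → ¬ a i <+: b i)
    (hSa : IsConcat S₁ a) (hSb : IsConcat S₂ b) (hab : SeqLexLt a b) :
    SeqLexLt S₁ S₂ := by
  obtain ⟨k, heq, hlt⟩ := hab
  have hprefix : ((List.range k).map a).flatten = ((List.range k).map b).flatten :=
    congrArg List.flatten <| List.map_congr_left fun i hi => heq i (List.mem_range.1 hi)
  have hne : a k ≠ b k := fun h => lt_irrefl (b k) (h ▸ hlt)
  have hSb' := hSb.seqIsPrefix_append k
  rw [← hprefix] at hSb'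
  refine SeqLexLt.of_seqIsPrefix (hSa.seqIsPrefix_append k) hSb' ?_ (List.append_left_lt hlt)
  rw [List.prefix_append_right_inj]
  exact hpf k hne

end IsConcat

/-- with a prefix-free dictionary, the infinite concatenation
`α₁α₂⋯` is lexicographically less than `β₁β₂⋯` iff the phrase sequences compare
the same way (phrases compared by the lexicographic order on strings). -/
theorem stmt_3 {σ : Type*} [LinearOrder σ] (D : Set (List σ))
    (hne : ∀ α ∈ D, α ≠ [])
    (hpf : ∀ α ∈ D, ∀ β ∈ D, α ≠ β → ¬ α <+: β)
    (S₁ S₂ : ℕ → σ) (a b : ℕ → List σ)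
    (ha : ∀ i, a i ∈ D) (hb : ∀ i, b i ∈ D)
    (hSa : IsConcat S₁ a) (hSb : IsConcat S₂ b) :
    SeqLexLt S₁ S₂ ↔
      (∃ k, (∀ i < k, a i = b i) ∧ List.Lex (· < ·) (a k) (b k)) := by
  have hpf_ab : ∀ i, a i ≠ b i → ¬ a i <+: b i := fun i => hpf _ (ha i) _ (hb i)
  have hpf_ba : ∀ i, b i ≠ a i → ¬ b i <+: a i := fun i => hpf _ (hb i) _ (ha i)
  refine ⟨fun hS => ?_, hSa.seqLexLt_of_seqLexLt hpf_ab hSb⟩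
  rw [seqLexLt_iff_toLex_lt] at hS
  -- `<` on `List σ` is `List.Lex (· < ·)`, so the right-hand side is `toLex a < toLex b`.
  rcases lt_trichotomy (toLex a) (toLex b) with hab | hab | hba
  · exact hab
  · obtain rfl : a = b := toLex.injective hab
    obtain rfl : S₁ = S₂ := hSa.unique hSb fun i => hne _ (ha i)
    exact absurd hS (lt_irrefl _)
  · exact absurd (hSb.seqLexLt_of_seqLexLt hpf_ba hSa hba) (lt_asymm hS)
end

section
/- With D a finite prefix-free set of nonempty strings and S an infinite periodic sequence parsed as S = d_{p(0)}·d_{p(1)}·d_{p(2)}·⋯ for p : ℕ → Fin m, two suffixes of S that begin at phrase boundaries (i.e., at positions Σ_{t<a} |d_{p(t)}| and Σ_{t<b} |d_{p(t)}|) compare lexicographically in the same way as the shifted index sequences (p(a), p(a+1), …) and (p(b), p(b+1), …) compare in the lexicographic order on ℕ → Fin m induced by the lexicographic order of the dictionary strings. -/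
section Aux

variable {σ : Type*}

lemma flatten_range_length (f : ℕ → List σ) (n : ℕ) :
    (((List.range n).map f).flatten).length = ∑ t ∈ Finset.range n, (f t).length := by
  induction n with
  | zero => simp
  | succ n ih => rw [List.range_succ, Finset.sum_range_succ]; simp [ih]

lemma flatten_range_prefix (f : ℕ → List σ) {n n' : ℕ} (h : n ≤ n') :
    ((List.range n).map f).flatten <+: ((List.range n').map f).flatten := by
  obtain ⟨k, rfl⟩ := Nat.exists_eq_add_of_le h
  rw [List.range_add, List.map_append, List.flatten_append]
  exact List.prefix_append _ _

variable {m : ℕ} (d : Fin m → List σ)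

/-- The infinite concatenation of `d (q 0), d (q 1), …`. -/
def Cseq (hne : ∀ i, d i ≠ []) (q : ℕ → Fin m) (i : ℕ) : σ :=
  (((List.range (i + 1)).map (fun t => d (q t))).flatten).get ⟨i, by
    rw [flatten_range_length]
    have : i + 1 = ∑ _t ∈ Finset.range (i + 1), 1 := by simp
    have hle : ∑ _t ∈ Finset.range (i + 1), 1 ≤
        ∑ t ∈ Finset.range (i + 1), (d (q t)).length :=
      Finset.sum_le_sum (fun t _ => Nat.one_le_iff_ne_zero.2
        (by simpa [List.length_eq_zero_iff] using hne (q t)))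
    omega⟩

lemma Cseq_eq_get (hne : ∀ i, d i ≠ []) (q : ℕ → Fin m) {n pos : ℕ}
    (h : pos < (((List.range n).map (fun t => d (q t))).flatten).length) :
    Cseq d hne q pos = (((List.range n).map (fun t => d (q t))).flatten)[pos] := by
  rcases le_total (pos + 1) n with hn | hn
  · exact (flatten_range_prefix (fun t => d (q t)) hn).getElem _
  · exact ((flatten_range_prefix (fun t => d (q t)) hn).getElem h).symm

lemma Cseq_block (hne : ∀ i, d i ≠ []) (q : ℕ → Fin m) (k i : ℕ)
    (hi : i < (d (q k)).length) :
    Cseq d hne q (∑ t ∈ Finset.range k, (d (q t)).length + i) = (d (q k))[i] := by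
  set L := ∑ t ∈ Finset.range k, (d (q t)).length with hL
  have hsplit : ((List.range (k + 1)).map (fun t => d (q t))).flatten
      = (((List.range k).map (fun t => d (q t))).flatten) ++ d (q k) := by
    rw [List.range_succ]; simp
  have hlen : (((List.range k).map (fun t => d (q t))).flatten).length = L :=
    flatten_range_length _ _
  have h : L + i < (((List.range (k + 1)).map (fun t => d (q t))).flatten).length := by
    rw [hsplit, List.length_append, hlen]; omega
  rw [Cseq_eq_get d hne q h]
  have := List.getElem_append_right (as := ((List.range k).map (fun t => d (q t))).flatten)
    (bs := d (q k)) (i := L + i) (by omega) (h₂ := by rw [← hsplit]; exact h)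
  simp only [hsplit]
  rw [this]
  congr 1
  omega

lemma Cseq_low (hne : ∀ i, d i ≠ []) {q r : ℕ → Fin m} {k : ℕ}
    (hagree : ∀ t < k, q t = r t) {pos : ℕ}
    (hpos : pos < ∑ t ∈ Finset.range k, (d (q t)).length) :
    Cseq d hne q pos = Cseq d hne r pos := by
  have hlists : (List.range k).map (fun t => d (q t)) = (List.range k).map (fun t => d (r t)) :=
    List.map_congr_left (fun t ht => by rw [hagree t (List.mem_range.mp ht)])
  have hq : pos < (((List.range k).map (fun t => d (q t))).flatten).length := by
    rw [flatten_range_length]; exact hpos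
  have hr : pos < (((List.range k).map (fun t => d (r t))).flatten).length := by
    rw [← hlists]; exact hq
  rw [Cseq_eq_get d hne q hq, Cseq_eq_get d hne r hr]
  simp only [hlists]

lemma lex_exists {σ : Type*} [LinearOrder σ] {l₁ l₂ : List σ}
    (h : List.Lex (· < ·) l₁ l₂) (hnp : ¬ l₁ <+: l₂) :
    ∃ j, ∃ (h₁ : j < l₁.length) (h₂ : j < l₂.length),
      (∀ i, (hi : i < j) → l₁[i]'(by omega) = l₂[i]'(by omega)) ∧ l₁[j] < l₂[j] := by
  induction h with
  | nil => exact absurd (List.nil_prefix) hnp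
  | @cons a l₁ l₂ h ih =>
    have hnp' : ¬ l₁ <+: l₂ := fun hp => hnp (List.cons_prefix_cons.mpr ⟨rfl, hp⟩)
    obtain ⟨j, h₁, h₂, hag, hlt⟩ := ih hnp'
    refine ⟨j + 1, by simpa using h₁, by simpa using h₂, ?_, by simpa using hlt⟩
    intro i hi
    match i with
    | 0 => simp
    | Nat.succ i' => simpa using hag i' (by omega)
  | @rel a l₁ b l₂ hab =>
    exact ⟨0, by simp, by simp, fun i hi => absurd hi (by omega), by simpa using hab⟩

lemma seqLex_irrefl {τ : Type*} [Preorder τ] {x : ℕ → τ} : ¬ SeqLexLt x x := by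
  rintro ⟨k, -, hk⟩; exact lt_irrefl _ hk

lemma seqLex_asymm {τ : Type*} [LinearOrder τ] {x y : ℕ → τ}
    (h1 : SeqLexLt x y) (h2 : SeqLexLt y x) : False := by
  obtain ⟨k, a1, l1⟩ := h1
  obtain ⟨k', a2, l2⟩ := h2
  rcases lt_trichotomy k k' with h | h | h
  · rw [a2 k h] at l1; exact lt_irrefl _ l1
  · subst h; exact lt_irrefl _ (l1.trans l2)
  · rw [a1 k' h] at l2; exact lt_irrefl _ l2

lemma seqLex_tri {τ : Type*} [LinearOrder τ] {x y : ℕ → τ} (hne : x ≠ y) :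
    SeqLexLt x y ∨ SeqLexLt y x := by
  classical
  have hex : ∃ k, x k ≠ y k := by
    by_contra h; push_neg at h; exact hne (funext h)
  have hk : x (Nat.find hex) ≠ y (Nat.find hex) := Nat.find_spec hex
  have hag : ∀ i < Nat.find hex, x i = y i := fun i hi => by
    have := Nat.find_min hex hi; tauto
  rcases lt_or_gt_of_ne hk with h | h
  · exact Or.inl ⟨_, hag, h⟩
  · exact Or.inr ⟨_, fun i hi => (hag i hi).symm, h⟩

lemma seqLexLt_Cseq [LinearOrder σ] (hne : ∀ i, d i ≠ [])
    (hsorted : ∀ i j : Fin m, i < j → List.Lex (· < ·) (d i) (d j))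
    (hpf : ∀ i j : Fin m, i ≠ j → ¬ d i <+: d j)
    {q r : ℕ → Fin m} (h : SeqLexLt q r) :
    SeqLexLt (Cseq d hne q) (Cseq d hne r) := by
  obtain ⟨k, hag, hk⟩ := h
  have hlex := hsorted _ _ hk
  have hnp := hpf (q k) (r k) (by exact fun he => absurd he (ne_of_lt hk))
  obtain ⟨j, h₁, h₂, hjag, hjlt⟩ := lex_exists hlex hnp
  set L := ∑ t ∈ Finset.range k, (d (q t)).length with hL
  have hLr : ∑ t ∈ Finset.range k, (d (r t)).length = L :=
    (Finset.sum_congr rfl (fun t ht => by rw [hag t (Finset.mem_range.mp ht)])).symm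
  refine ⟨L + j, ?_, ?_⟩
  · intro i hi
    rcases lt_or_ge i L with hiL | hiL
    · exact Cseq_low d hne hag hiL
    · obtain ⟨i', rfl⟩ := Nat.exists_eq_add_of_le hiL
      have hi' : i' < j := by omega
      rw [Cseq_block d hne q k i' (by omega)]
      have hR := Cseq_block d hne r k i' (by omega)
      rw [hLr] at hR
      rw [hR]
      exact hjag i' hi'
  · rw [Cseq_block d hne q k j h₁]
    have hR := Cseq_block d hne r k j h₂
    rw [hLr] at hR
    rw [hR]
    exact hjlt

lemma suffix_eq_Cseq (hne : ∀ i, d i ≠ []) (S : ℕ → σ) (p : ℕ → Fin m)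
    (hSp : IsConcat S (fun t => d (p t))) (a : ℕ) :
    (fun i => S (∑ t ∈ Finset.range a, (d (p t)).length + i))
      = Cseq d hne (fun t => p (a + t)) := by
  funext i
  set B := ∑ t ∈ Finset.range a, (d (p t)).length with hB
  -- the big flatten
  have hsplit : ((List.range (a + (i + 1))).map (fun t => d (p t))).flatten
      = (((List.range a).map (fun t => d (p t))).flatten)
        ++ (((List.range (i + 1)).map (fun t => d (p (a + t)))).flatten) := by
    rw [List.range_add, List.map_append, List.flatten_append, List.map_map]
    rfl
  have hlenB : (((List.range a).map (fun t => d (p t))).flatten).length = B :=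
    flatten_range_length _ _
  have hlen2 : i < (((List.range (i + 1)).map (fun t => d (p (a + t)))).flatten).length := by
    rw [flatten_range_length]
    have hle : ∑ _t ∈ Finset.range (i + 1), 1 ≤
        ∑ t ∈ Finset.range (i + 1), (d (p (a + t))).length :=
      Finset.sum_le_sum (fun t _ => Nat.one_le_iff_ne_zero.2
        (by simpa [List.length_eq_zero_iff] using hne (p (a + t))))
    simp at hle; omega
  have hbig : B + i < (((List.range (a + (i + 1))).map (fun t => d (p t))).flatten).length := by
    rw [hsplit, List.length_append, hlenB]; omega
  have hS : S (B + i) = (((List.range (a + (i + 1))).map (fun t => d (p t))).flatten)[B + i] :=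
    hSp (a + (i + 1)) (B + i) hbig
  rw [hS]
  have hget := List.getElem_append_right
    (as := ((List.range a).map (fun t => d (p t))).flatten)
    (bs := ((List.range (i + 1)).map (fun t => d (p (a + t)))).flatten)
    (i := B + i) (by omega) (h₂ := by rw [← hsplit]; exact hbig)
  simp only [hsplit]
  simp only [hlenB, Nat.add_sub_cancel_left] at hget
  rw [hget]
  exact (Cseq_eq_get d hne (fun t => p (a + t)) hlen2).symm

end Aux

/-- comparison lemma, Boucher et al., Lemma 3, abstract form:
suffixes of `S` beginning at phrase boundaries compare lexicographically
exactly as the corresponding shifted index sequences of the parse. -/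
theorem stmt_15 {σ : Type*} [LinearOrder σ] (m : ℕ) (d : Fin m → List σ)
    (hne : ∀ i, d i ≠ [])
    (hsorted : ∀ i j : Fin m, i < j → List.Lex (· < ·) (d i) (d j))
    (hpf : ∀ i j : Fin m, i ≠ j → ¬ d i <+: d j)
    (S : ℕ → σ) (p : ℕ → Fin m)
    (hSp : IsConcat S (fun t => d (p t)))
    (a b : ℕ) :
    SeqLexLt (fun i => S (∑ t ∈ Finset.range a, (d (p t)).length + i))
             (fun i => S (∑ t ∈ Finset.range b, (d (p t)).length + i)) ↔
      SeqLexLt (fun t => p (a + t)) (fun t => p (b + t)) := by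
  rw [suffix_eq_Cseq d hne S p hSp a, suffix_eq_Cseq d hne S p hSp b]
  constructor
  · intro h
    by_cases he : (fun t => p (a + t)) = (fun t => p (b + t))
    · rw [he] at h; exact absurd h seqLex_irrefl
    · rcases seqLex_tri he with h1 | h1
      · exact h1
      · exact absurd (seqLexLt_Cseq d hne hsorted hpf h1) (fun h2 => seqLex_asymm h h2)
  · exact seqLexLt_Cseq d hne hsorted hpf
end
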